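/- arXiv:1010.5835 — 4 statements merged into one kernel-verified Lean document; each statement's English description precedes it below -/
import Mathlib

section
/- Let $k$ be a field of characteristic $2$ containing an element $\omega$ with $\omega^2 + \omega + 1 = 0$, and let $E$ be the Weierstrass curve $y^2 + y = x^3$ over $k$. Define on affine points $\sigma(x,y) = (\omega x, y)$, $\sigma^2(x,y) = (\omega^2 x, y)$ and $\theta(x,y) = (x+1,\ y + x + \omega)$. Then for every affine point $P = (x,y)$ of $E$, the identity $\mathrm{id}_E = \theta\circ\sigma - \sigma^2\circ\theta$ holds in the group of points of $E$: namely, $(\omega x + 1,\ y + \omega x + \omega) - (\omega^2(x+1),\ y + x + \omega) = (x, y)$, where both displayed points are affine points of $E$. -/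
/-!
In characteristic `2` the relation `ω² + ω + 1 = 0` gives `ω³ = 1` and `ω + 1 = ω²`, so
`σ(x, y) = (ωx, y)` and `θ(x, y) = (x + 1, y + x + ω)` preserve `y² + y = x³`: for `θ` because
`(x + 1)³ = x³ + x² + x + 1` and `(y + x + ω)² + (y + x + ω) = y² + y + x² + x + 1`.
The line through `θσP` and `-σ²θP` has slope `ω²` (at `x = ω` these two points coincide and it
is the tangent there), and the addition formula with this slope returns `P = (x, y)`.
-/

def E2 (k : Type*) [CommRing k] : WeierstrassCurve.Affine k :=
  { a₁ := 0, a₂ := 0, a₃ := 1, a₄ := 0, a₆ := 0 }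

open WeierstrassCurve.Affine

section CommRing

variable {R : Type*} [CommRing R]

lemma E2_equation_iff (x y : R) : (E2 R).Equation x y ↔ y ^ 2 + y = x ^ 3 := by
  simp [equation_iff, E2]

variable [CharP R 2]

lemma E2_negY (x y : R) : (E2 R).negY x y = y + 1 := by
  simp only [negY, E2]
  grind

lemma E2_nonsingular_iff (x y : R) : (E2 R).Nonsingular x y ↔ y ^ 2 + y = x ^ 3 := by
  rw [nonsingular_iff, E2_equation_iff, ← negY, E2_negY]
  exact and_iff_left_of_imp fun _ => Or.inr fun h => by grind

lemma E2_nonsingular_mul_left {ζ x y : R} (hζ : ζ ^ 3 = 1) (h : (E2 R).Nonsingular x y) :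
    (E2 R).Nonsingular (ζ * x) y := by
  rw [E2_nonsingular_iff] at h ⊢
  grind

lemma E2_nonsingular_translate {ω x y : R} (hω : ω ^ 2 + ω + 1 = 0)
    (h : (E2 R).Nonsingular x y) : (E2 R).Nonsingular (x + 1) (y + x + ω) := by
  rw [E2_nonsingular_iff] at h ⊢
  grind

lemma theta_sigma_ne_sigma_sq_theta {ω : R} (hω : ω ^ 2 + ω + 1 = 0) (x y : R) :
    ¬(ω * x + 1 = ω ^ 2 * (x + 1) ∧ y + ω * x + ω = y + x + ω) := by
  grind

end CommRing

section Field

variable {k : Type*} [Field k] [CharP k 2] [DecidableEq k]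

lemma E2_slope_of_X_eq {x₁ x₂ y₁ y₂ : k} (hx : x₁ = x₂) (hy : y₁ ≠ (E2 k).negY x₂ y₂) :
    (E2 k).slope x₁ x₂ y₁ y₂ = x₁ ^ 2 := by
  rw [slope_of_Y_ne hx hy, E2_negY, div_eq_iff (by grind)]
  simp only [E2]
  grind

lemma E2_slope_theta_sigma_neg_sigma_sq_theta {ω : k} (hω : ω ^ 2 + ω + 1 = 0) (x y : k) :
    (E2 k).slope (ω * x + 1) (ω ^ 2 * (x + 1)) (y + ω * x + ω)
      ((E2 k).negY (ω ^ 2 * (x + 1)) (y + x + ω)) = ω ^ 2 := by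
  by_cases hx : ω * x + 1 = ω ^ 2 * (x + 1)
  · rw [E2_slope_of_X_eq hx (by rw [negY_negY]; exact fun hy ↦
      theta_sigma_ne_sigma_sq_theta hω x y ⟨hx, hy⟩)]
    grind
  · rw [slope_of_X_ne hx, div_eq_iff (sub_ne_zero.mpr hx), E2_negY]
    grind

end Field

open Classical in
/-- On the curve `y² + y = x³` over a field of characteristic `2` containing a primitive cube
root of unity `ω`, the identity `id = θ∘σ - σ²∘θ` holds, where `σ(x, y) = (ωx, y)` and
`θ(x, y) = (x + 1, y + x + ω)`: for every affine point `(x, y)` one has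
`(ωx + 1, y + ωx + ω) - (ω²(x + 1), y + x + ω) = (x, y)` in the group of points. -/
theorem id_eq_theta_sigma_sub_sigma_sq_theta (k : Type*) [Field k] [CharP k 2]
    (ω : k) (hω : ω ^ 2 + ω + 1 = 0) (x y : k) (h : (E2 k).Nonsingular x y) :
    ∃ (hA : (E2 k).Nonsingular (ω * x + 1) (y + ω * x + ω))
      (hB : (E2 k).Nonsingular (ω ^ 2 * (x + 1)) (y + x + ω)),
      Point.some _ _ hA - Point.some _ _ hB = Point.some _ _ h := by
  have hω3 : ω ^ 3 = 1 := by linear_combination (ω - 1) * hω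
  refine ⟨E2_nonsingular_translate hω (E2_nonsingular_mul_left hω3 h),
    E2_nonsingular_mul_left (ζ := ω ^ 2) (by grind) (E2_nonsingular_translate hω h), ?_⟩
  have hne := theta_sigma_ne_sigma_sq_theta hω x y
  rw [← negY_negY (W' := E2 k) (ω ^ 2 * (x + 1)) (y + x + ω)] at hne
  rw [sub_eq_add_neg, Point.neg_some, Point.add_some hne, Point.some.injEq,
    E2_slope_theta_sigma_neg_sigma_sq_theta hω, addY, negAddY, addX, E2_negY]
  simp only [E2]
  grind
end

section
/- Let $k$ be a field of characteristic $2$ containing an element $\omega$ with $\omega^2 + \omega + 1 = 0$, and let $E$ be the Weierstrass curve $y^2 + y = x^3$ over $k$. Define on affine points $\sigma(x,y) = (\omega x, y)$ and $\theta(x,y) = (x+1,\ y + x + \omega)$, and let $F$ denote the Frobenius map $F(x,y) = (x^2, y^2)$. Then for every affine point $P = (x,y)$ of $E$, the relation $F = \sigma\circ\theta - \theta\circ\sigma$ holds in the group of points of $E$: namely, $(\omega(x+1),\ y + x + \omega) - (\omega x + 1,\ y + \omega x + \omega) = (x^2, y^2)$, where all displayed points are affine points of $E$. -/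
open WeierstrassCurve.Affine

namespace E2

variable {R : Type*} [CommRing R]

theorem equation_iff (x y : R) : (E2 R).Equation x y ↔ y ^ 2 + y = x ^ 3 := by
  rw [WeierstrassCurve.Affine.equation_iff]
  simp only [E2]
  ring_nf

theorem Δ_eq_one [CharP R 2] : (E2 R).Δ = 1 := by
  rw [WeierstrassCurve.Δ_of_char_two]
  simp [E2]

instance [CharP R 2] : (E2 R).IsElliptic := ⟨by rw [Δ_eq_one]; exact isUnit_one⟩

theorem equation_sigma {ω : R} (hω : ω ^ 3 = 1) {x y : R} (h : (E2 R).Equation x y) :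
    (E2 R).Equation (ω * x) y := by
  rw [equation_iff] at h ⊢
  linear_combination h - x ^ 3 * hω

theorem equation_theta [CharP R 2] {ω : R} (hω : ω ^ 2 + ω + 1 = 0) {x y : R}
    (h : (E2 R).Equation x y) : (E2 R).Equation (x + 1) (y + x + ω) := by
  have h2 : (2 : R) = 0 := CharTwo.two_eq_zero
  rw [equation_iff] at h ⊢
  linear_combination h + hω + (x * y + ω * y + ω * x - x ^ 2 - x - 1) * h2

theorem equation_frobenius [CharP R 2] {x y : R} (h : (E2 R).Equation x y) :
    (E2 R).Equation (x ^ 2) (y ^ 2) := by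
  have h2 : (2 : R) = 0 := CharTwo.two_eq_zero
  rw [equation_iff] at h ⊢
  linear_combination (y ^ 2 + y + x ^ 3) * h - y ^ 3 * h2

end E2

section Field

variable {F : Type*} [Field F] [CharP F 2] {ω : F}

theorem X_sigma_theta_ne_X_theta_sigma (hω : ω ^ 2 + ω + 1 = 0) (x : F) :
    ω * (x + 1) ≠ ω * x + 1 := by
  intro hx
  have h2 : (2 : F) = 0 := CharTwo.two_eq_zero
  exact one_ne_zero (by linear_combination hω - ω * hx - ω * h2)

variable [DecidableEq F]

theorem slope_sigma_theta_negY_theta_sigma (hω : ω ^ 2 + ω + 1 = 0) (x y : F) :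
    (E2 F).slope (ω * (x + 1)) (ω * x + 1) (y + x + ω) ((E2 F).negY (ω * x + 1) (y + ω * x + ω))
      = x + ω := by
  have h2 : (2 : F) = 0 := CharTwo.two_eq_zero
  have hx := X_sigma_theta_ne_X_theta_sigma hω x
  rw [slope_of_X_ne hx, div_eq_iff (sub_ne_zero.mpr hx)]
  simp only [E2, negY]
  linear_combination (y + x + ω - ω ^ 2) * h2 + hω

theorem some_sigma_theta_sub_some_theta_sigma (hω : ω ^ 2 + ω + 1 = 0) {x y : F}
    (h : (E2 F).Equation x y) (hA : (E2 F).Nonsingular (ω * (x + 1)) (y + x + ω))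
    (hB : (E2 F).Nonsingular (ω * x + 1) (y + ω * x + ω))
    (hC : (E2 F).Nonsingular (x ^ 2) (y ^ 2)) :
    Point.some _ _ hA - Point.some _ _ hB = Point.some _ _ hC := by
  have h2 : (2 : F) = 0 := CharTwo.two_eq_zero
  rw [E2.equation_iff] at h
  rw [sub_eq_add_neg, Point.neg_some, Point.add_of_X_ne (X_sigma_theta_ne_X_theta_sigma hω x),
    Point.some.injEq, slope_sigma_theta_negY_theta_sigma hω]
  constructor
  · simp only [E2, addX]
    linear_combination hω - (ω + 1) * h2
  · simp only [E2, addY, negAddY, addX, negY]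
    linear_combination -h - (ω - 1) * hω + (-x ^ 3 + ω * x + ω ^ 2 - 1) * h2

end Field

open Classical in
/-- On the curve `y² + y = x³` over a field of characteristic `2` containing a primitive cube
root of unity `ω`, the identity `F = σ∘θ - θ∘σ` holds, where `σ(x, y) = (ωx, y)`,
`θ(x, y) = (x + 1, y + x + ω)` and `F(x, y) = (x², y²)` is the Frobenius: for every affine
point `(x, y)` one has `(ω(x + 1), y + x + ω) - (ωx + 1, y + ωx + ω) = (x², y²)` in the group
of points. -/
theorem frobenius_eq_sigma_theta_sub_theta_sigma (k : Type*) [Field k] [CharP k 2]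
    (ω : k) (hω : ω ^ 2 + ω + 1 = 0) (x y : k) (h : (E2 k).Nonsingular x y) :
    ∃ (hA : (E2 k).Nonsingular (ω * (x + 1)) (y + x + ω))
      (hB : (E2 k).Nonsingular (ω * x + 1) (y + ω * x + ω))
      (hC : (E2 k).Nonsingular (x ^ 2) (y ^ 2)),
      Point.some _ _ hA - Point.some _ _ hB = Point.some _ _ hC := by
  rw [← equation_iff_nonsingular] at h
  have hω3 : ω ^ 3 = 1 := by linear_combination (ω - 1) * hω
  have hA := E2.equation_sigma hω3 (E2.equation_theta hω h)
  have hB := E2.equation_theta hω (E2.equation_sigma hω3 h)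
  have hC := E2.equation_frobenius h
  refine ⟨equation_iff_nonsingular.mp hA, equation_iff_nonsingular.mp hB,
    equation_iff_nonsingular.mp hC, some_sigma_theta_sub_some_theta_sigma hω h _ _ _⟩
end

section
/- Let $k$ be a field of characteristic $2$ containing an element $\omega$ with $\omega^2 + \omega + 1 = 0$. Suppose $x, y \in k$ satisfy $y^2 + y = x^3$ and $x \neq 0$. Set $w = (x^3 + 1)/x^2$ and $z = y + 1 + x^{-3} + \omega$. Then $z^2 + z = w^3$. (Thus the quotient of the curve $y^2+y=x^3$ by the translation $\tau$ by the $3$-torsion point $(0,0)$ is again the curve $z^2 + z = w^3$.) -/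
/-! In characteristic `2` the Artin–Schreier map `z ↦ z² + z` is additive, so for
`z = y + x⁻³ + (ω + 1)` the value `z² + z` splits as `(y² + y) + (x⁻⁶ + x⁻³) + (ω² + ω)`,
that is `x³ + x⁻⁶ + x⁻³ + 1`. Since `3 ≡ 1 (mod 2)`, expanding `w³ = x³ (1 + x⁻³)³` gives the
same four terms. -/

namespace CharTwo

section CommRing

variable {R : Type*} [CommRing R] [CharP R 2]

theorem sq_add_self_add (a b : R) : (a + b) ^ 2 + (a + b) = (a ^ 2 + a) + (b ^ 2 + b) := by
  rw [add_sq]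
  ring

theorem sq_add_self_eq_one {ω : R} (hω : ω ^ 2 + ω + 1 = 0) : ω ^ 2 + ω = 1 :=
  CharTwo.add_eq_zero.mp hω

theorem add_one_pow_three (t : R) : (t + 1) ^ 3 = t ^ 3 + t ^ 2 + t + 1 := by
  linear_combination (t ^ 2 + t) * two_eq_zero (R := R)

end CommRing

theorem pow_three_add_one_div_sq_pow_three {k : Type*} [Field k] [CharP k 2] {x : k}
    (hx : x ≠ 0) :
    ((x ^ 3 + 1) / x ^ 2) ^ 3 = x ^ 3 + 1 + (((x ^ 3)⁻¹) ^ 2 + (x ^ 3)⁻¹) := by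
  have hfactor : ((x ^ 3 + 1) / x ^ 2) ^ 3 = x ^ 3 * ((x ^ 3)⁻¹ + 1) ^ 3 := by
    field_simp
    ring
  have hinv : x ^ 3 * (x ^ 3)⁻¹ = 1 := mul_inv_cancel₀ (pow_ne_zero 3 hx)
  rw [hfactor, add_one_pow_three]
  linear_combination (((x ^ 3)⁻¹) ^ 2 + (x ^ 3)⁻¹ + 1) * hinv

end CharTwo

/-- Over a field of characteristic `2` containing a primitive cube root of unity `ω`, if
`y² + y = x³` and `x ≠ 0`, then `w = (x³ + 1)/x²` and `z = y + 1 + x⁻³ + ω` satisfy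
`z² + z = w³`: the quotient of the curve `y² + y = x³` by translation by the 3-torsion point
`(0, 0)` is again the curve `z² + z = w³`. -/
theorem quotient_curve_equation (k : Type*) [Field k] [CharP k 2]
    (ω : k) (hω : ω ^ 2 + ω + 1 = 0) (x y : k) (h : y ^ 2 + y = x ^ 3) (hx : x ≠ 0) :
    (y + 1 + (x ^ 3)⁻¹ + ω) ^ 2 + (y + 1 + (x ^ 3)⁻¹ + ω) = ((x ^ 3 + 1) / x ^ 2) ^ 3 := by
  have hz : y + 1 + (x ^ 3)⁻¹ + ω = y + (x ^ 3)⁻¹ + (ω + 1) := by ring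
  rw [hz, CharTwo.sq_add_self_add, CharTwo.sq_add_self_add, CharTwo.sq_add_self_add ω 1, one_pow,
    CharTwo.add_self_eq_zero, add_zero, CharTwo.sq_add_self_eq_one hω, h,
    CharTwo.pow_three_add_one_div_sq_pow_three hx]
  ring
end

section
/- Let $k$ be a field of characteristic $2$ containing an element $\omega$ with $\omega^2 + \omega + 1 = 0$. Suppose $x, y \in k$ satisfy $y^2 + y = x^3$, $x \neq 0$ and $y \neq 0$, and set $x' = y/x^2$, $y' = y/x^3$. Then the functions $w = (x^3+1)/x^2$ and $z = y + 1 + x^{-3} + \omega$ are invariant under the substitution $(x,y) \mapsto (x', y')$: namely $(x'^3 + 1)/x'^2 = (x^3+1)/x^2$ and $y' + 1 + x'^{-3} + \omega = y + 1 + x^{-3} + \omega$. -/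
/-!
On the curve `x³ = y(y + 1)`; after clearing denominators only powers of `x³` remain, so
substituting `y(y + 1)` for them turns both identities into polynomial identities in `y`,
which hold in characteristic `2`.
-/

theorem ne_zero_of_sq_add_self_eq_pow_three {R : Type*} [Semiring R] [NoZeroDivisors R]
    {x y : R} (h : y ^ 2 + y = x ^ 3) (hx : x ≠ 0) : y ≠ 0 := by
  rintro rfl
  exact hx (by simpa using h.symm)

section CharTwo

variable {k : Type*} [Field k] [CharP k 2] {x y : k}

theorem translate_w_eq (h : y ^ 2 + y = x ^ 3) (hx : x ≠ 0) :
    ((y / x ^ 2) ^ 3 + 1) / (y / x ^ 2) ^ 2 = (x ^ 3 + 1) / x ^ 2 := by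
  have hy := ne_zero_of_sq_add_self_eq_pow_three h hx
  field_simp
  linear_combination (-(y + x ^ 3)) * h + y ^ 3 * CharTwo.two_eq_zero (R := k)

theorem translate_z_eq (h : y ^ 2 + y = x ^ 3) (hx : x ≠ 0) :
    y / x ^ 3 + ((y / x ^ 2) ^ 3)⁻¹ = y + (x ^ 3)⁻¹ := by
  have hy := ne_zero_of_sq_add_self_eq_pow_three h hx
  field_simp
  linear_combination (-(x ^ 6 + (y ^ 2 + y) * x ^ 3 + 2 * y ^ 3 + y ^ 2)) * h +
    (y ^ 5 + 2 * y ^ 4) * CharTwo.two_eq_zero (R := k)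

end CharTwo

theorem w_z_invariant_under_translation_general (k : Type*) [Field k] [CharP k 2]
    (ω : k) (x y : k) (h : y ^ 2 + y = x ^ 3)
    (hx : x ≠ 0) :
    ((y / x ^ 2) ^ 3 + 1) / (y / x ^ 2) ^ 2 = (x ^ 3 + 1) / x ^ 2 ∧
    y / x ^ 3 + 1 + ((y / x ^ 2) ^ 3)⁻¹ + ω = y + 1 + (x ^ 3)⁻¹ + ω :=
  ⟨translate_w_eq h hx, by linear_combination translate_z_eq h hx⟩

/-- Over a field of characteristic `2` containing a primitive cube root of unity `ω`, the
functions `w = (x³ + 1)/x²` and `z = y + 1 + x⁻³ + ω` on the curve `y² + y = x³` are invariant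
under the translation `(x, y) ↦ (y/x², y/x³)` by the 3-torsion point `(0, 0)`. -/
theorem w_z_invariant_under_translation (k : Type*) [Field k] [CharP k 2]
    (ω : k) (hω : ω ^ 2 + ω + 1 = 0) (x y : k) (h : y ^ 2 + y = x ^ 3)
    (hx : x ≠ 0) (hy : y ≠ 0) :
    ((y / x ^ 2) ^ 3 + 1) / (y / x ^ 2) ^ 2 = (x ^ 3 + 1) / x ^ 2 ∧
    y / x ^ 3 + 1 + ((y / x ^ 2) ^ 3)⁻¹ + ω = y + 1 + (x ^ 3)⁻¹ + ω :=
  w_z_invariant_under_translation_general k ω x y h hx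
end
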